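/- arXiv:0902.2133 — 8 statements merged into one kernel-verified Lean document; each statement's English description precedes it below -/
import Mathlib

section
/- For every a ≥ 0 and every integer n ≥ 1, the n-th derivative of f_a at any x > 0 equals (−1)^{n+1} · n! · e^a · (e^a − 1)^{n−1} / (1 + x(e^a − 1))^{n+1}. -/
/-!
`f_a` is the Möbius transformation `x ↦ (e^a x + 0) / ((e^a - 1) x + 1)`. The first derivative
of `(p y + q) / (r y + s)` is `(p s - q r) / (r y + s)^2`, and differentiating `C / (r y + s)^k`
multiplies by `-k r` and raises the exponent by one, which produces the sign, the factorial and
the power of `r = e^a - 1`. For `a ≥ 0` and `x > 0` the denominator is at least `1`.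
-/

/-- The homographic family `f_a(x) = x e^a / (1 + x (e^a - 1))`. -/
noncomputable def f (a x : ℝ) : ℝ := x * Real.exp a / (1 + x * (Real.exp a - 1))

section Moebius

variable {𝕜 : Type*} [NontriviallyNormedField 𝕜] {p q r s x : 𝕜}

theorem hasDerivAt_moebius (hx : r * x + s ≠ 0) :
    HasDerivAt (fun y => (p * y + q) / (r * y + s)) ((p * s - q * r) / (r * x + s) ^ 2) x := by
  have hnum : HasDerivAt (fun y => p * y + q) p x := by
    simpa using ((hasDerivAt_id x).const_mul p).add_const q
  have hden : HasDerivAt (fun y => r * y + s) r x := by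
    simpa using ((hasDerivAt_id x).const_mul r).add_const s
  exact (hnum.fun_div hden hx).congr_deriv (by ring)

theorem hasDerivAt_const_div_linear_pow (C : 𝕜) (m : ℕ) (hx : r * x + s ≠ 0) :
    HasDerivAt (fun y => C / (r * y + s) ^ (m + 1))
      (-((m + 1) * r * C) / (r * x + s) ^ (m + 2)) x := by
  have hden : HasDerivAt (fun y => (r * y + s) ^ (m + 1)) ((m + 1) * (r * x + s) ^ m * r) x := by
    simpa using (((hasDerivAt_id x).const_mul r).add_const s).fun_pow (m + 1)
  refine ((hasDerivAt_const x C).fun_div hden (pow_ne_zero _ hx)).congr_deriv ?_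
  field_simp
  ring

/-- Stated on the open set off the pole, since the induction step differentiates the
`n + 1`-st derivative and so needs the formula on a neighbourhood of each point. -/
theorem eqOn_iteratedDeriv_succ_moebius (n : ℕ) :
    Set.EqOn (iteratedDeriv (n + 1) fun y => (p * y + q) / (r * y + s))
      (fun y => (-1) ^ n * (n + 1).factorial * r ^ n * (p * s - q * r) / (r * y + s) ^ (n + 2))
      {y | r * y + s ≠ 0} := by
  have hopen : IsOpen {y | r * y + s ≠ 0} := isOpen_ne_fun (by fun_prop) continuous_const
  induction n with
  | zero =>
    intro y hy
    simpa [iteratedDeriv_one] using (hasDerivAt_moebius hy).deriv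
  | succ n ih =>
    intro y hy
    rw [iteratedDeriv_succ, (ih.eventuallyEq_of_mem (hopen.mem_nhds hy)).deriv_eq,
      (hasDerivAt_const_div_linear_pow _ (n + 1) hy).deriv, Nat.factorial_succ (n + 1)]
    push_cast
    ring

end Moebius

/-- For every `a ≥ 0` and every `n ≥ 1`, the `n`-th derivative of `f_a` at any `x > 0`
equals `(-1)^(n+1) n! e^a (e^a - 1)^(n-1) / (1 + x (e^a - 1))^(n+1)`. -/
theorem iteratedDeriv_f (a : ℝ) (ha : 0 ≤ a) (n : ℕ) (hn : 1 ≤ n) (x : ℝ) (hx : 0 < x) :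
    iteratedDeriv n (f a) x =
      (-1) ^ (n + 1) * (n.factorial : ℝ) * Real.exp a * (Real.exp a - 1) ^ (n - 1) /
        (1 + x * (Real.exp a - 1)) ^ (n + 1) := by
  obtain ⟨m, rfl⟩ := Nat.exists_eq_add_of_le' hn
  have hf : f a = fun y => (Real.exp a * y + 0) / ((Real.exp a - 1) * y + 1) := by
    ext y
    simp only [f]
    ring
  have hpole : (Real.exp a - 1) * x + 1 ≠ 0 := by
    have hc : 0 ≤ Real.exp a - 1 := sub_nonneg.mpr (Real.one_le_exp ha)
    positivity
  rw [hf, eqOn_iteratedDeriv_succ_moebius m hpole]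
  simp only [Nat.add_sub_cancel]
  ring
end

section
/- Each f_a is a Bernstein function: f_a(0) = 0, f_a(x) ≥ 0 for all x ≥ 0, and for every integer n ≥ 1 and every x > 0 one has (−1)^{n+1} · (iterated derivative of order n of f_a at x) ≥ 0. -/
open scoped Nat

theorem iteratedDeriv_succ_div_one_add_mul {𝕜 : Type*} [NontriviallyNormedField 𝕜]
    (n : ℕ) {c x : 𝕜} (hx : 1 + c * x ≠ 0) :
    iteratedDeriv (n + 1) (fun y => y / (1 + c * y)) x
      = (-1) ^ n * (n + 1)! * c ^ n / (1 + c * x) ^ (n + 2) := by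
  rcases eq_or_ne c 0 with rfl | hc
  · rcases n with _ | n <;> simp [iteratedDeriv_fun_id]
  -- Only off the pole: there Lean's `y / 0 = 0` disagrees with the right-hand side.
  have hpartial : Set.EqOn (fun y => y / (1 + c * y)) (fun y => c⁻¹ - c⁻¹ * (c * y + 1)⁻¹)
      {y | 1 + c * y ≠ 0} := by
    intro y (hy : 1 + c * y ≠ 0)
    beta_reduce
    rw [add_comm (c * y), div_eq_mul_inv]
    linear_combination c⁻¹ * mul_inv_cancel₀ hy - y * (1 + c * y)⁻¹ * mul_inv_cancel₀ hc
  have hopen : IsOpen {y : 𝕜 | 1 + c * y ≠ 0} := isOpen_ne_fun (by fun_prop) (by fun_prop)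
  rw [hpartial.iteratedDeriv_of_isOpen hopen (n + 1) hx, iteratedDeriv_const_sub n.succ_pos,
    iteratedDeriv_neg, iteratedDeriv_const_mul_field, iteratedDeriv_eq_iterate,
    iter_deriv_inv_linear]
  have hexp : (-1 - (n + 1 : ℕ) : ℤ) = -((n + 2 : ℕ) : ℤ) := by push_cast; ring
  beta_reduce
  rw [hexp, zpow_neg, zpow_natCast, add_comm (c * x)]
  field_simp
  rw [Nat.succ_eq_add_one]
  ring

theorem f_eq_mul_div_one_add_mul (a : ℝ) :
    f a = fun x => Real.exp a * (x / (1 + (Real.exp a - 1) * x)) := by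
  funext x
  rw [f, mul_comm (Real.exp a) _, mul_div_right_comm, mul_comm x (Real.exp a - 1)]

theorem iteratedDeriv_succ_f (a : ℝ) (n : ℕ) {x : ℝ} (hx : 1 + (Real.exp a - 1) * x ≠ 0) :
    iteratedDeriv (n + 1) (f a) x
      = (-1) ^ n * (Real.exp a * (n + 1)! * (Real.exp a - 1) ^ n
          / (1 + (Real.exp a - 1) * x) ^ (n + 2)) := by
  rw [f_eq_mul_div_one_add_mul, iteratedDeriv_const_mul_field,
    iteratedDeriv_succ_div_one_add_mul n hx]
  ring

/-- Each `f_a` is a Bernstein function: `f_a(0) = 0`, `f_a(x) ≥ 0` for `x ≥ 0`, and for every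
`n ≥ 1` and `x > 0` one has `(-1)^(n+1) · f_a^(n)(x) ≥ 0`. -/
theorem f_bernstein (a : ℝ) (ha : 0 ≤ a) :
    f a 0 = 0 ∧ (∀ x : ℝ, 0 ≤ x → 0 ≤ f a x) ∧
      (∀ n : ℕ, 1 ≤ n → ∀ x : ℝ, 0 < x → 0 ≤ (-1 : ℝ) ^ (n + 1) * iteratedDeriv n (f a) x) := by
  have hc : 0 ≤ Real.exp a - 1 := sub_nonneg.2 (Real.one_le_exp ha)
  have hden {x : ℝ} (hx : 0 ≤ x) : 0 < 1 + (Real.exp a - 1) * x := by positivity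
  refine ⟨by simp [f], fun x hx => ?_, fun n hn x hx => ?_⟩
  · rw [f_eq_mul_div_one_add_mul]
    have hpos := hden hx
    positivity
  · obtain ⟨m, rfl⟩ := Nat.exists_eq_add_of_le' hn
    have hpos := hden hx.le
    rw [iteratedDeriv_succ_f a m hpos.ne', ← mul_assoc, ← pow_add,
      Even.neg_one_pow ⟨m + 1, by ring⟩, one_mul]
    positivity
end

section
/- For every a > 0 and every λ ≥ 0, ∫₀^∞ (1 − e^{−λy}) ν_a(dy) = f_a(λ); that is, ν_a is the Lévy measure of the Bernstein function f_a. -/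
open MeasureTheory

/-- The measure `ν_a` on `(0, ∞)` with density
`y ↦ e^a (e^a - 1)⁻² e^(-y/(e^a - 1))` with respect to Lebesgue measure. -/
noncomputable def nu (a : ℝ) : Measure ℝ :=
  (volume.restrict (Set.Ioi (0 : ℝ))).withDensity fun y =>
    ENNReal.ofReal (Real.exp a / (Real.exp a - 1) ^ 2 * Real.exp (-y / (Real.exp a - 1)))

/-!
With `b = e^a - 1`, the density of `ν_a` is `e^a b⁻² e^{-y/b}`, and the integral is a difference
of two exponential integrals:
`∫₀^∞ (1 - e^{-λy}) e^{-y/b} dy = b - (λ + b⁻¹)⁻¹ = λb² / (1 + λb)`,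
which after multiplication by `e^a b⁻²` is `f_a(λ)`.
-/

open Real Set

theorem integral_withDensity_ofReal {X E : Type*} [MeasurableSpace X] [NormedAddCommGroup E]
    [NormedSpace ℝ E] {μ : Measure X} {ρ : X → ℝ} (hρ : Measurable ρ) (hρ_nonneg : ∀ x, 0 ≤ ρ x)
    (g : X → E) :
    ∫ x, g x ∂μ.withDensity (fun x => ENNReal.ofReal (ρ x)) = ∫ x, ρ x • g x ∂μ := by
  rw [integral_withDensity_eq_integral_toReal_smul hρ.ennreal_ofReal
    (ae_of_all _ fun _ => ENNReal.ofReal_lt_top)]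
  simp only [ENNReal.toReal_ofReal (hρ_nonneg _)]

theorem integral_nu (a : ℝ) (g : ℝ → ℝ) :
    ∫ y, g y ∂nu a =
      exp a / (exp a - 1) ^ 2 * ∫ y in Ioi 0, exp (-(exp a - 1)⁻¹ * y) * g y := by
  rw [nu, integral_withDensity_ofReal (by fun_prop) (fun _ => by positivity), ← integral_const_mul]
  congr 1
  funext y
  rw [smul_eq_mul, neg_div, neg_mul, inv_mul_eq_div]
  ring

theorem integral_exp_neg_mul_Ioi_zero {r : ℝ} (hr : 0 < r) :
    ∫ y in Ioi 0, exp (-r * y) = r⁻¹ := by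
  rw [integral_exp_mul_Ioi (neg_lt_zero.2 hr), mul_zero, exp_zero, neg_div_neg_eq, one_div]

theorem integral_exp_neg_mul_mul_one_sub_exp_neg_mul_Ioi_zero {r l : ℝ} (hr : 0 < r)
    (hlr : 0 < l + r) :
    ∫ y in Ioi 0, exp (-r * y) * (1 - exp (-l * y)) = r⁻¹ - (l + r)⁻¹ := by
  have hsplit : ∀ y, exp (-r * y) * (1 - exp (-l * y)) = exp (-r * y) - exp (-(l + r) * y) := by
    intro y
    rw [mul_one_sub, ← exp_add]
    ring_nf
  simp_rw [hsplit]
  rw [integral_sub (integrableOn_exp_mul_Ioi (neg_lt_zero.2 hr) 0)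
    (integrableOn_exp_mul_Ioi (neg_lt_zero.2 hlr) 0), integral_exp_neg_mul_Ioi_zero hr,
    integral_exp_neg_mul_Ioi_zero hlr]

/-- For every `a > 0` and `λ ≥ 0`, `∫₀^∞ (1 - e^(-λ y)) ν_a(dy) = f_a(λ)`:
`ν_a` is the Lévy measure of the Bernstein function `f_a`. -/
theorem nu_levy_measure_of_f (a : ℝ) (ha : 0 < a) (l : ℝ) (hl : 0 ≤ l) :
    ∫ y, (1 - Real.exp (-l * y)) ∂(nu a) = f a l := by
  have hb : 0 < exp a - 1 := sub_pos.2 (one_lt_exp_iff.2 ha)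
  rw [integral_nu, integral_exp_neg_mul_mul_one_sub_exp_neg_mul_Ioi_zero (inv_pos.2 hb)
    (by positivity), f]
  field_simp
  ring
end

section
/- Let a > 0 and t > 0. Let (E_k)_{k≥1} be an i.i.d. sequence of random variables with the exponential distribution of rate 1, let N be a random variable with the Poisson distribution of parameter t·e^a/(e^a − 1), and assume N is independent of (E_k). Then for every λ ≥ 0, E[exp(−λ·(e^a − 1)·∑_{k=1}^{N} E_k)] = exp(−t·f_a(λ)); i.e., the compound Poisson random variable (e^a − 1)∑_{k=1}^{N} E_k realizes the subordinator with Laplace exponent f_a at time t. -/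
/-!
Put `c = λ (e^a - 1)` and `μ = t e^a / (e^a - 1)`. An exponential variable of rate 1 has Laplace
transform `1 / (1 + c)` at `c`, so by independence `𝔼[exp (-c ∑_{k<n} E_k)] = (1 + c)⁻ⁿ`.
Since `N` is independent of the `E_k`, averaging over its Poisson law gives
`𝔼[(1 + c)^(-N)] = exp (μ ((1 + c)⁻¹ - 1))`, and `μ c / (1 + c) = t f_a(λ)`.
-/

open MeasureTheory ProbabilityTheory

open Real Set
open scoped NNReal

namespace ProbabilityTheory

theorem mgf_id_expMeasure {r t : ℝ} (hr : 0 < r) (ht : t < r) :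
    mgf id (expMeasure r) t = r / (r - t) := by
  have hdens (x : ℝ) : (exponentialPDF r x).toReal • exp (t * x) =
      indicator (Ici 0) (fun x => r * exp ((t - r) * x)) x := by
    by_cases hx : 0 ≤ x
    · rw [exponentialPDF_eq, if_pos hx, ENNReal.toReal_ofReal (by positivity),
        indicator_of_mem (mem_Ici.2 hx), smul_eq_mul, mul_assoc, ← exp_add]
      ring_nf
    · simp [exponentialPDF_eq, hx]
  change ∫ x, exp (t * x) ∂(volume.withDensity (exponentialPDF r)) = _
  rw [integral_withDensity_eq_integral_toReal_smul (f := exponentialPDF r)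
    (measurable_exponentialPDFReal r).ennreal_ofReal (.of_forall fun _ => ENNReal.ofReal_lt_top)]
  simp only [hdens]
  rw [integral_indicator measurableSet_Ici, integral_Ici_eq_integral_Ioi, integral_const_mul,
    integral_exp_mul_Ioi (by linarith), mul_zero, exp_zero, neg_div, ← div_neg, neg_sub,
    mul_one_div]

theorem ae_nonneg_expMeasure (r : ℝ) : ∀ᵐ x ∂expMeasure r, 0 ≤ x := by
  simp only [ae_iff, not_le]
  change volume.withDensity (exponentialPDF r) (Iio 0) = 0
  rw [withDensity_apply _ measurableSet_Iio, lintegral_exponentialPDF_of_nonpos le_rfl]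

theorem integral_pow_poissonMeasure (μ : ℝ≥0) (s : ℝ) :
    ∫ n, s ^ n ∂poissonMeasure μ = exp (μ * (s - 1)) := by
  rw [integral_poissonMeasure]
  calc ∑' n : ℕ, (exp (-μ) * μ ^ n / n.factorial) • s ^ n
      = ∑' n : ℕ, exp (-μ) * ((μ * s) ^ n / n.factorial) := by
        congr with n
        rw [smul_eq_mul, mul_pow]
        ring
    _ = exp (-μ) * exp (μ * s) := by
        rw [tsum_mul_left, (NormedSpace.expSeries_div_hasSum_exp ((μ : ℝ) * s)).tsum_eq,
          exp_eq_exp_ℝ]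
    _ = exp (μ * (s - 1)) := by
        rw [← exp_add]
        ring_nf

theorem IndepFun.integral_comp_prodMk {Ω α β E : Type*} [MeasurableSpace Ω] [MeasurableSpace α]
    [MeasurableSpace β] [NormedAddCommGroup E] [NormedSpace ℝ E] {P : Measure Ω}
    [IsFiniteMeasure P] {X : Ω → α} {Y : Ω → β} (hXY : IndepFun X Y P) (hX : AEMeasurable X P)
    (hY : AEMeasurable Y P) {G : α × β → E}
    (hG : AEStronglyMeasurable G ((P.map X).prod (P.map Y)))
    (hint : Integrable (fun ω => G (X ω, Y ω)) P) :
    ∫ ω, G (X ω, Y ω) ∂P = ∫ x, ∫ y, G (x, y) ∂(P.map Y) ∂(P.map X) := by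
  have hmap := (indepFun_iff_map_prod_eq_prod_map_map hX hY).1 hXY
  rw [← hmap] at hG
  have hGint : Integrable G (P.map fun ω => (X ω, Y ω)) :=
    (integrable_map_measure hG (hX.prodMk hY)).2 hint
  rw [← integral_map (hX.prodMk hY) hG, hmap, integral_prod _ (hmap ▸ hGint)]

theorem integral_exp_mul_sum_range_poisson {Ω : Type*} [MeasurableSpace Ω] {P : Measure Ω}
    [IsProbabilityMeasure P] {E : ℕ → Ω → ℝ} {N : Ω → ℕ} {μ : ℝ≥0} {t m : ℝ} (ht : t ≤ 0)
    (hE : ∀ k, Measurable (E k)) (hN : Measurable N) (hE_nonneg : ∀ k, ∀ᵐ ω ∂P, 0 ≤ E k ω)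
    (hE_mgf : ∀ k, mgf (E k) P t = m) (hE_indep : iIndepFun E P)
    (hN_indep : IndepFun N (fun ω k => E k ω) P) (hN_law : P.map N = poissonMeasure μ) :
    ∫ ω, exp (t * ∑ k ∈ Finset.range (N ω), E k ω) ∂P = exp (μ * (m - 1)) := by
  set G : ℕ × (ℕ → ℝ) → ℝ := fun p => exp (t * ∑ k ∈ Finset.range p.1, p.2 k)
  have hG_section (n : ℕ) : Measurable fun y => G (n, y) :=
    ((Finset.measurable_sum (Finset.range n) fun k _ => measurable_pi_apply k).const_mul t).exp
  have hG : Measurable G := measurable_from_prod_countable_right hG_section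
  have hY : Measurable fun ω k => E k ω := measurable_pi_lambda _ hE
  have hbound : ∀ᵐ ω ∂P, ‖G (N ω, fun k => E k ω)‖ ≤ 1 := by
    filter_upwards [ae_all_iff.2 hE_nonneg] with ω hω
    rw [Real.norm_of_nonneg (exp_nonneg _), exp_le_one_iff]
    exact mul_nonpos_of_nonpos_of_nonneg ht (Finset.sum_nonneg fun k _ => hω k)
  have hsection (n : ℕ) : ∫ y, G (n, y) ∂P.map (fun ω k => E k ω) = m ^ n := by
    rw [integral_map hY.aemeasurable (hG_section n).aestronglyMeasurable]
    have h := hE_indep.mgf_sum hE (Finset.range n) (t := t)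
    rw [Finset.prod_congr rfl fun k _ => hE_mgf k, Finset.prod_const, Finset.card_range, mgf] at h
    simpa only [Finset.sum_apply] using h
  calc ∫ ω, exp (t * ∑ k ∈ Finset.range (N ω), E k ω) ∂P
      = ∫ n, ∫ y, G (n, y) ∂P.map (fun ω k => E k ω) ∂P.map N :=
        hN_indep.integral_comp_prodMk hN.aemeasurable hY.aemeasurable hG.aestronglyMeasurable
          (.of_bound (hG.comp (hN.prodMk hY)).aestronglyMeasurable 1 hbound)
    _ = exp (μ * (m - 1)) := by simp_rw [hsection, hN_law, integral_pow_poissonMeasure]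

end ProbabilityTheory

/-- Let `a > 0`, `t > 0`, let `(E_k)` be an i.i.d. sequence of exponential random variables of
rate `1`, and let `N` be Poisson of parameter `t e^a/(e^a - 1)` independent of `(E_k)`.
Then for every `λ ≥ 0`,
`𝔼[exp (-λ (e^a - 1) ∑_{k<N} E_k)] = exp (-t f_a(λ))`: the compound Poisson random variable
`(e^a - 1) ∑_{k<N} E_k` realizes the subordinator with Laplace exponent `f_a` at time `t`. -/
theorem compound_poisson_f (a t : ℝ) (ha : 0 < a) (ht : 0 < t)
    {Ω : Type*} [MeasurableSpace Ω] (P : Measure Ω) [IsProbabilityMeasure P]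
    (E : ℕ → Ω → ℝ) (N : Ω → ℕ)
    (hEmeas : ∀ k, Measurable (E k))
    (hNmeas : Measurable N)
    (hEdist : ∀ k, P.map (E k) = expMeasure 1)
    (hEindep : iIndepFun (m := fun _ => Real.measurableSpace) E P)
    (hNindep : IndepFun N (fun ω => fun k => E k ω) P)
    (hNdist : P.map N = poissonMeasure (t * Real.exp a / (Real.exp a - 1)).toNNReal) :
    ∀ l : ℝ, 0 ≤ l →
      ∫ ω, Real.exp (-l * (Real.exp a - 1) * ∑ k ∈ Finset.range (N ω), E k ω) ∂P =
        Real.exp (-t * f a l) := by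
  intro l hl
  have hea : 0 < exp a - 1 := sub_pos.2 (one_lt_exp_iff.2 ha)
  have hc : 0 ≤ l * (exp a - 1) := mul_nonneg hl hea.le
  have hE_mgf (k : ℕ) : mgf (E k) P (-l * (exp a - 1)) = 1 / (1 + l * (exp a - 1)) := by
    rw [← mgf_id_map (hEmeas k).aemeasurable, hEdist k,
      mgf_id_expMeasure one_pos (by linarith), neg_mul, sub_neg_eq_add]
  have hE_nonneg (k : ℕ) : ∀ᵐ ω ∂P, 0 ≤ E k ω :=
    ae_of_ae_map (hEmeas k).aemeasurable (hEdist k ▸ ae_nonneg_expMeasure 1)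
  rw [integral_exp_mul_sum_range_poisson (by linarith) hEmeas hNmeas hE_nonneg hE_mgf hEindep
    hNindep hNdist, Real.coe_toNNReal _ (by positivity), f]
  congr 1
  field_simp
  ring
end

section
/- Fix a ≥ 0 and t ≥ 0, and let μ be a measure on [0,∞) such that ∫ e^{−s·x} μ(dx) = exp(−t·f_a(s)) for every s ≥ 0 (μ is the law of the subordinator with Laplace exponent f_a at time t). Then for every b ≥ 0 and every λ ≥ 0, ∫ exp(−x·f_b(λ)) μ(dx) = exp(−t·f_{a+b}(λ)); i.e., subordinating by f_b yields the subordinator with Laplace exponent f_{a+b}. -/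
open MeasureTheory

open Real

lemma one_add_mul_exp_sub_one_pos {b x : ℝ} (hb : 0 ≤ b) (hx : 0 ≤ x) :
    0 < 1 + x * (exp b - 1) := by
  have : 0 ≤ x * (exp b - 1) := mul_nonneg hx (by simpa using one_le_exp hb)
  linarith

lemma f_nonneg {b x : ℝ} (hb : 0 ≤ b) (hx : 0 ≤ x) : 0 ≤ f b x :=
  div_nonneg (by positivity) (one_add_mul_exp_sub_one_pos hb hx).le

lemma f_f_eq_f_add (a b x : ℝ) (hx : 1 + x * (exp b - 1) ≠ 0) :
    f a (f b x) = f (a + b) x := by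
  have hden : 1 + f b x * (exp a - 1) = (1 + x * (exp (a + b) - 1)) / (1 + x * (exp b - 1)) := by
    rw [f, exp_add]
    field_simp
    ring
  rw [f, hden, f, f, exp_add, div_mul_eq_mul_div, div_div_div_cancel_right₀ hx]
  ring_nf

theorem subordination_f_general (a t : ℝ)
    (μ : Measure ℝ)
    (hμ : ∀ s : ℝ, 0 ≤ s → ∫ x, Real.exp (-s * x) ∂μ = Real.exp (-t * f a s)) :
    ∀ b : ℝ, 0 ≤ b → ∀ l : ℝ, 0 ≤ l →
      ∫ x, Real.exp (-x * f b l) ∂μ = Real.exp (-t * f (a + b) l) := by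
  intro b hb l hl
  calc ∫ x, exp (-x * f b l) ∂μ
      = ∫ x, exp (-f b l * x) ∂μ := by simp_rw [neg_mul, mul_comm]
    _ = exp (-t * f a (f b l)) := hμ _ (f_nonneg hb hl)
    _ = exp (-t * f (a + b) l) := by
        rw [f_f_eq_f_add a b l (one_add_mul_exp_sub_one_pos hb hl).ne']

/-- Let `μ` be a measure on `[0, ∞)` whose Laplace transform is `s ↦ exp (-t f_a(s))` (the law
of the subordinator with Laplace exponent `f_a` at time `t`). Then for every `b ≥ 0` and
`λ ≥ 0`, `∫ exp (-x f_b(λ)) μ(dx) = exp (-t f_{a+b}(λ))`: subordinating by `f_b` yields the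
subordinator with Laplace exponent `f_{a+b}`. -/
theorem subordination_f (a t : ℝ) (ha : 0 ≤ a) (ht : 0 ≤ t)
    (μ : Measure ℝ) (hsupp : μ (Set.Iio 0) = 0)
    (hμ : ∀ s : ℝ, 0 ≤ s → ∫ x, Real.exp (-s * x) ∂μ = Real.exp (-t * f a s)) :
    ∀ b : ℝ, 0 ≤ b → ∀ l : ℝ, 0 ≤ l →
      ∫ x, Real.exp (-x * f b l) ∂μ = Real.exp (-t * f (a + b) l) :=
  subordination_f_general a t μ hμ
end

section
/- For all a, b > 0 and all λ ≥ 0, ∫₀^∞ (exp(−x·g_b(λ)) − exp(−x/b)) ν̃_a(dx) = ∫₀^∞ e^{−λy} ν̃_{a+b}(dy); i.e., transporting the entrance rule ν̃_a by the transition kernel of the squared Bessel(0) diffusion (whose action on exponentials is x ↦ e^{−x·g_b(λ)}) and restricting to (0,∞) gives ν̃_{a+b}, expressed in Laplace-transform form (the subtracted term e^{−x/b} accounts for the atom at 0, since g_b(λ) → 1/b as λ → ∞). -/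
open MeasureTheory

/-- The family `g_a(x) = x / (1 + a x)`. -/
noncomputable def g (a x : ℝ) : ℝ := x / (1 + a * x)

/-- The measure `ν̃_a` on `(0, ∞)` with density `y ↦ a⁻² e^(-y/a)` w.r.t. Lebesgue measure. -/
noncomputable def nuTilde (a : ℝ) : Measure ℝ :=
  (volume.restrict (Set.Ioi (0 : ℝ))).withDensity fun y =>
    ENNReal.ofReal (a⁻¹ ^ 2 * Real.exp (-y / a))

/-! Both sides are Laplace transforms of `ν̃`: `∫ e^(-s x) ν̃_a(dx) = 1 / (a (1 + a s))` for
`s > -1/a`, and the identity reduces to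
`(1 + b λ) / (a (1 + (a + b) λ)) - b / (a (a + b)) = 1 / ((a + b) (1 + (a + b) λ))`. -/

open Set Real

theorem nuTilde_eq_withDensity_toNNReal (a : ℝ) :
    nuTilde a = (volume.restrict (Ioi 0)).withDensity
      fun y => ((a⁻¹ ^ 2 * exp (-y / a)).toNNReal : ENNReal) :=
  rfl

theorem integral_nuTilde (a : ℝ) (f : ℝ → ℝ) :
    ∫ x, f x ∂nuTilde a = ∫ x in Ioi 0, a⁻¹ ^ 2 * exp (-x / a) * f x := by
  rw [nuTilde_eq_withDensity_toNNReal, integral_withDensity_eq_integral_smul (by fun_prop)]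
  congr 1 with x
  rw [NNReal.smul_def, smul_eq_mul, coe_toNNReal _ (by positivity)]

theorem integrable_nuTilde_iff (a : ℝ) (f : ℝ → ℝ) :
    Integrable f (nuTilde a) ↔ IntegrableOn (fun x => a⁻¹ ^ 2 * exp (-x / a) * f x) (Ioi 0) := by
  rw [nuTilde_eq_withDensity_toNNReal, integrable_withDensity_iff_integrable_smul (by fun_prop)]
  refine integrable_congr (ae_of_all _ fun x => ?_)
  dsimp only
  rw [NNReal.smul_def, smul_eq_mul, coe_toNNReal _ (by positivity)]

theorem nuTilde_density_mul_exp (a s x : ℝ) :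
    a⁻¹ ^ 2 * exp (-x / a) * exp (-s * x) = a⁻¹ ^ 2 * exp (-(s + a⁻¹) * x) := by
  rw [mul_assoc, ← exp_add]
  ring_nf

theorem integrable_exp_neg_mul_nuTilde {a s : ℝ} (hs : -a⁻¹ < s) :
    Integrable (fun x => exp (-s * x)) (nuTilde a) := by
  rw [integrable_nuTilde_iff]
  simp_rw [nuTilde_density_mul_exp]
  exact (integrableOn_exp_mul_Ioi (by linarith) 0).const_mul _

theorem integral_exp_neg_mul_nuTilde {a s : ℝ} (ha : 0 < a) (hs : -a⁻¹ < s) :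
    ∫ x, exp (-s * x) ∂nuTilde a = 1 / (a * (1 + a * s)) := by
  have hsa : s + a⁻¹ = (1 + a * s) / a := by field_simp; ring
  rw [integral_nuTilde]
  simp_rw [nuTilde_density_mul_exp]
  rw [integral_const_mul, integral_exp_mul_Ioi (by linarith), mul_zero, exp_zero,
    neg_div_neg_eq, hsa]
  field_simp

/-- For `a, b > 0` and `λ ≥ 0`,
`∫₀^∞ (exp (-x g_b(λ)) - exp (-x/b)) ν̃_a(dx) = ∫₀^∞ e^(-λ y) ν̃_{a+b}(dy)`:
transporting the entrance rule `ν̃_a` by the transition kernel of the squared Bessel(0)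
diffusion (whose action on exponentials is `x ↦ e^(-x g_b(λ))`) and restricting to `(0, ∞)`
gives `ν̃_{a+b}`, in Laplace-transform form (the subtracted term `e^(-x/b)` accounts for the
atom at `0`, since `g_b(λ) → 1/b` as `λ → ∞`). -/
theorem entrance_rule_g (a b : ℝ) (ha : 0 < a) (hb : 0 < b) (l : ℝ) (hl : 0 ≤ l) :
    ∫ x, (Real.exp (-x * g b l) - Real.exp (-x / b)) ∂(nuTilde a) =
      ∫ y, Real.exp (-l * y) ∂(nuTilde (a + b)) := by
  have hab : 0 < a + b := by linarith
  have hg : -a⁻¹ < g b l := by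
    have : 0 ≤ g b l := by unfold g; positivity
    linarith [inv_pos.2 ha]
  have hb' : -a⁻¹ < b⁻¹ := by linarith [inv_pos.2 ha, inv_pos.2 hb]
  have hl' : -(a + b)⁻¹ < l := by linarith [inv_pos.2 hab]
  have hintegrand : (fun x => exp (-x * g b l) - exp (-x / b)) =
      fun x => exp (-g b l * x) - exp (-b⁻¹ * x) := by
    ext x
    ring_nf
  rw [hintegrand,
    integral_sub (integrable_exp_neg_mul_nuTilde hg) (integrable_exp_neg_mul_nuTilde hb'),
    integral_exp_neg_mul_nuTilde ha hg, integral_exp_neg_mul_nuTilde ha hb',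
    integral_exp_neg_mul_nuTilde hab hl', g]
  field_simp
  ring
end

section
/- Fix a ≥ 0 and t ≥ 0, and let μ be a measure on [0,∞) such that ∫ e^{−s·x} μ(dx) = exp(−t·g_a(s)) for every s ≥ 0 (μ is the law of the subordinator with Laplace exponent g_a at time t). Then for every b ≥ 0 and every λ ≥ 0, ∫ exp(−x·g_b(λ)) μ(dx) = exp(−t·g_{a+b}(λ)); i.e., subordinating by g_b yields the subordinator with Laplace exponent g_{a+b}. -/
open MeasureTheory

/-- Let `μ` be a measure on `[0, ∞)` whose Laplace transform is `s ↦ exp (-t g_a(s))` (the law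
of the subordinator with Laplace exponent `g_a` at time `t`). Then for every `b ≥ 0` and
`λ ≥ 0`, `∫ exp (-x g_b(λ)) μ(dx) = exp (-t g_{a+b}(λ))`: subordinating by `g_b` yields the
subordinator with Laplace exponent `g_{a+b}`. -/
theorem subordination_g (a t : ℝ) (ha : 0 ≤ a) (ht : 0 ≤ t)
    (μ : Measure ℝ) (hsupp : μ (Set.Iio 0) = 0)
    (hμ : ∀ s : ℝ, 0 ≤ s → ∫ x, Real.exp (-s * x) ∂μ = Real.exp (-t * g a s)) :
    ∀ b : ℝ, 0 ≤ b → ∀ l : ℝ, 0 ≤ l →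
      ∫ x, Real.exp (-x * g b l) ∂μ = Real.exp (-t * g (a + b) l) := by
  intro b hb l hl
  have hden : 0 < 1 + b * l := by positivity
  have hs : 0 ≤ g b l := div_nonneg hl hden.le
  have key : g a (g b l) = g (a + b) l := by
    have hden2 : 0 < 1 + (a + b) * l := by positivity
    have hden3 : (1 + b * l) + a * l > 0 := by positivity
    unfold g
    rw [div_div]
    congr 1
    calc (1 + b * l) * (1 + a * (l / (1 + b * l)))
        = (1 + b * l) + a * (l / (1 + b * l) * (1 + b * l)) := by ring
      _ = (1 + b * l) + a * l := by rw [div_mul_cancel₀ _ hden.ne']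
      _ = 1 + (a + b) * l := by ring
  calc ∫ x, Real.exp (-x * g b l) ∂μ
      = ∫ x, Real.exp (-(g b l) * x) ∂μ := by
        congr 1; ext x; ring_nf
    _ = Real.exp (-t * g a (g b l)) := hμ _ hs
    _ = Real.exp (-t * g (a + b) l) := by rw [key]
end

section
/- Let a > 0 and t > 0, and let μ be a measure on [0,∞) such that ∫ e^{−s·x} μ(dx) = exp(−t·f_a(s)) for every s ≥ 0 (μ is the law of the subordinator with Laplace exponent f_a at time t). Then μ({0}) = exp(−t·e^a/(e^a − 1)); i.e., the subordinator with Laplace exponent f_a has an atom at 0 of mass exp(−t·e^a/(e^a − 1)), obtained as the limit of exp(−t·f_a(λ)) as λ → ∞. -/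
open MeasureTheory Filter Real Set Topology

lemma isFiniteMeasure_of_integral_one_ne_zero {α : Type*} [MeasurableSpace α] {μ : Measure α}
    (h : ∫ _x, (1 : ℝ) ∂μ ≠ 0) : IsFiniteMeasure μ := by
  rw [integral_const, smul_eq_mul, mul_one] at h
  exact ⟨lt_top_iff_ne_top.2 fun htop => h (by simp [Measure.real, htop])⟩

lemma tendsto_exp_neg_mul_atTop_indicator_zero {x : ℝ} (hx : 0 ≤ x) :
    Tendsto (fun s : ℝ => exp (-s * x)) atTop (𝓝 (({0} : Set ℝ).indicator 1 x)) := by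
  rcases hx.eq_or_lt with rfl | hx
  · simp
  · rw [indicator_of_notMem (mem_singleton_iff.not.2 hx.ne')]
    simp_rw [neg_mul]
    exact tendsto_exp_atBot.comp (tendsto_neg_atTop_atBot.comp (tendsto_id.atTop_mul_const hx))

lemma tendsto_integral_exp_neg_mul_atTop {μ : Measure ℝ} [IsFiniteMeasure μ]
    (hμ : μ (Iio 0) = 0) :
    Tendsto (fun s : ℝ => ∫ x, exp (-s * x) ∂μ) atTop (𝓝 (μ.real {0})) := by
  have hnonneg : ∀ᵐ x ∂μ, 0 ≤ x := by
    rw [ae_iff]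
    simp only [not_le]
    exact hμ
  rw [← integral_indicator_one (measurableSet_singleton 0)]
  refine tendsto_integral_filter_of_dominated_convergence (fun _ => 1)
    (.of_forall fun s => by fun_prop) ?_ (integrable_const 1) ?_
  · filter_upwards [eventually_ge_atTop 0] with s hs
    filter_upwards [hnonneg] with x hx
    rw [norm_of_nonneg (exp_pos _).le, exp_le_one_iff]
    nlinarith
  · filter_upwards [hnonneg] with x hx
    exact tendsto_exp_neg_mul_atTop_indicator_zero hx

lemma tendsto_mul_div_one_add_mul_atTop (b : ℝ) {c : ℝ} (hc : c ≠ 0) :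
    Tendsto (fun x : ℝ => x * b / (1 + x * c)) atTop (𝓝 (b / c)) := by
  have h : Tendsto (fun x : ℝ => b / (x⁻¹ + c)) atTop (𝓝 (b / (0 + c))) :=
    tendsto_const_nhds.div (tendsto_inv_atTop_zero.add_const c) (by simpa using hc)
  rw [zero_add] at h
  refine h.congr' ((eventually_gt_atTop 0).mono fun x hx => ?_)
  rw [← mul_div_mul_left b _ hx.ne', mul_add, mul_inv_cancel₀ hx.ne']

lemma tendsto_f_atTop {a : ℝ} (ha : a ≠ 0) :
    Tendsto (f a) atTop (𝓝 (exp a / (exp a - 1))) :=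
  tendsto_mul_div_one_add_mul_atTop _ (sub_ne_zero.2 ((exp_eq_one_iff a).not.2 ha))

theorem atom_at_zero_f_general (a t : ℝ) (ha : 0 < a)
    (μ : MeasureTheory.Measure ℝ) (hsupp : μ (Set.Iio 0) = 0)
    (hμ : ∀ s : ℝ, 0 ≤ s → ∫ x, Real.exp (-s * x) ∂μ = Real.exp (-t * f a s)) :
    μ {0} = ENNReal.ofReal (Real.exp (-t * (Real.exp a / (Real.exp a - 1)))) := by
  -- `∫ 1 ∂μ = 1` forces finiteness: for an infinite measure the Bochner integral is the junk value 0.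
  have : IsFiniteMeasure μ := isFiniteMeasure_of_integral_one_ne_zero <| by
    simpa [f] using (hμ 0 le_rfl).trans_ne (exp_pos _).ne'
  have hlaplace : Tendsto (fun s => exp (-t * f a s)) atTop (𝓝 (μ.real {0})) :=
    (tendsto_integral_exp_neg_mul_atTop hsupp).congr' <|
      (eventually_ge_atTop 0).mono fun s hs => hμ s hs
  have hlimit := ((tendsto_f_atTop ha.ne').const_mul (-t)).rexp
  rw [← tendsto_nhds_unique hlaplace hlimit, ofReal_measureReal]

/-- Let `a > 0`, `t > 0`, and let `μ` be a measure on `[0, ∞)` whose Laplace transform is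
`s ↦ exp (-t f_a(s))` (the law of the subordinator with Laplace exponent `f_a` at time `t`).
Then `μ({0}) = exp (-t e^a/(e^a - 1))`: the subordinator has an atom at `0` of mass
`exp (-t e^a/(e^a - 1))`, the limit of `exp (-t f_a(λ))` as `λ → ∞`. -/
theorem atom_at_zero_f (a t : ℝ) (ha : 0 < a) (ht : 0 < t)
    (μ : MeasureTheory.Measure ℝ) (hsupp : μ (Set.Iio 0) = 0)
    (hμ : ∀ s : ℝ, 0 ≤ s → ∫ x, Real.exp (-s * x) ∂μ = Real.exp (-t * f a s)) :
    μ {0} = ENNReal.ofReal (Real.exp (-t * (Real.exp a / (Real.exp a - 1)))) :=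
  atom_at_zero_f_general a t ha μ hsupp hμ
end
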